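/- Let C_φ be a cutting for a knowledge base T and φ that is totally ordered by inclusion. If φ ▷ ψ (with respect to C_φ), then C_ψ = {𝕄 ∩ Mod(ψ) | 𝕄 ∈ C_φ} is a cutting for T and ψ, and ψ ▷ ψ (with respect to C_ψ). (Explanatory reflexivity E-Reflexivity.) -/

import Mathlib

variable {Sen M : Type*}

/-- The class of models of a set of sentences in a satisfaction system. -/
def ModS (sat : M → Sen → Prop) (T : Set Sen) : Set M := {m | ∀ φ ∈ T, sat m φ}

/-- The trivial models: those satisfying every sentence. -/
def TrivS (sat : M → Sen → Prop) : Set M := {m | ∀ φ : Sen, sat m φ}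

/-- A cutting for a knowledge base `T` and a sentence `φ`. -/
structure IsCutting (sat : M → Sen → Prop) (T : Set Sen) (φ : Sen) (C : Set (Set M)) : Prop where
  subset_mod : ∀ A ∈ C, A ⊆ ModS sat (T ∪ {φ})
  triv_lt : ∀ A ∈ C, TrivS sat ⊂ A
  union_closed : ∀ S ⊆ C, S.Nonempty → ⋃₀ S ∈ C
  top_mem : ModS sat (T ∪ {φ}) ∈ C
  wf : C.WellFoundedOn (fun A B => A ⊂ B)

/-- The set of ⊆-minimal elements of a family of sets. -/
def MinCut (C : Set (Set M)) : Set (Set M) := {A ∈ C | ∀ B ∈ C, ¬ B ⊂ A}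

/-- The explanatory relation based on a cutting `C` (for the observation whose cutting is `C`):
`ψ` is an explanation iff `Mod(T ∪ {ψ}) ≠ Triv` and `Mod(T ∪ {ψ})` is contained in some
minimal element of `C`. -/
def ExplRel (sat : M → Sen → Prop) (T : Set Sen) (C : Set (Set M)) (ψ : Sen) : Prop :=
  ModS sat (T ∪ {ψ}) ≠ TrivS sat ∧ ∃ A ∈ MinCut C, ModS sat (T ∪ {ψ}) ⊆ A

/- The minimal element `A₀` of `C_φ` containing `Mod(T ∪ {ψ})` is, `C_φ` being a chain, its least
element, so `Mod(T ∪ {ψ})` lies in every member of `C_φ`. Hence every `A ∩ Mod(ψ)` strictly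
contains `Triv`, and `A₀ ∩ Mod(ψ) = Mod(T ∪ {ψ})` is the top and at the same time the least element
of `C_ψ`, which makes `ψ` an explanation of itself. Unions commute with `· ∩ Mod(ψ)`, and since
`C_φ` is a chain, a strict inclusion `A ∩ Mod(ψ) ⊂ B ∩ Mod(ψ)` forces `A ⊂ B`, so `C_ψ` inherits
well-foundedness. -/

theorem IsChain.lt_of_monotoneOn {α β : Type*} [Preorder α] [Preorder β] {s : Set α}
    (hs : IsChain (· ≤ ·) s) {f : α → β} (hf : MonotoneOn f s) {a b : α} (ha : a ∈ s)
    (hb : b ∈ s) (hab : f a < f b) : a < b := by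
  have hle : a ≤ b :=
    (hs.total ha hb).resolve_right fun hba => hab.not_ge (hf hb ha hba)
  exact hle.lt_of_not_ge fun hba => hab.not_ge (hf hb ha hba)

theorem Set.IsWF.image_of_monotoneOn_of_isChain {α β : Type*} [Preorder α] [Preorder β]
    {s : Set α} (hwf : s.IsWF) (hs : IsChain (· ≤ ·) s) {f : α → β} (hf : MonotoneOn f s) :
    (f '' s).IsWF :=
  Set.wellFoundedOn_image.2 <|
    hwf.mono' fun _ ha _ hb hab => hs.lt_of_monotoneOn hf ha hb hab

theorem Set.sUnion_mem_image_inter {α : Type*} {C : Set (Set α)}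
    (hC : ∀ S ⊆ C, S.Nonempty → ⋃₀ S ∈ C) (X : Set α) {S : Set (Set α)}
    (hS : S ⊆ (· ∩ X) '' C) (hne : S.Nonempty) : ⋃₀ S ∈ (· ∩ X) '' C := by
  set S' := C ∩ (· ∩ X) ⁻¹' S
  have himage : (· ∩ X) '' S' = S := by
    rw [Set.image_inter_preimage, Set.inter_eq_right.2 hS]
  refine ⟨⋃₀ S', hC S' Set.inter_subset_left (himage ▸ hne).of_image, ?_⟩
  rw [← himage, Set.sUnion_image, Set.sUnion_eq_biUnion]
  exact Set.iUnion₂_inter _ _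

theorem IsChain.subset_of_mem_minCut {C : Set (Set M)} (hC : IsChain (· ⊆ ·) C) {A B : Set M}
    (hA : A ∈ MinCut C) (hB : B ∈ C) : A ⊆ B := by
  rcases hC.total hA.1 hB with hAB | hBA
  · exact hAB
  · by_contra hAB
    exact hA.2 B hB (ssubset_of_subset_not_subset hBA hAB)

section Satisfaction

variable {sat : M → Sen → Prop}

theorem modS_anti {S T : Set Sen} (h : S ⊆ T) : ModS sat T ⊆ ModS sat S :=
  fun _ hm x hx => hm x (h hx)

theorem modS_union (T S : Set Sen) : ModS sat (T ∪ S) = ModS sat T ∩ ModS sat S := by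
  ext m
  simp only [ModS, Set.mem_union, Set.mem_ofPred_eq, Set.mem_inter_iff, or_imp, forall_and]

theorem trivS_subset_modS (T : Set Sen) : TrivS sat ⊆ ModS sat T :=
  fun _ hm x _ => hm x

theorem IsCutting.inter_modS_subset {T : Set Sen} {φ : Sen} {C : Set (Set M)}
    (hC : IsCutting sat T φ C) (ψ : Sen) {A : Set M} (hA : A ∈ C) :
    A ∩ ModS sat {ψ} ⊆ ModS sat (T ∪ {ψ}) := by
  rw [modS_union]
  exact Set.inter_subset_inter_left _ ((hC.subset_mod A hA).trans (modS_anti Set.subset_union_left))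

theorem IsCutting.image_inter_modS {T : Set Sen} {φ ψ : Sen} {C : Set (Set M)}
    (hC : IsCutting sat T φ C) (hchain : IsChain (· ⊆ ·) C)
    (hne : ModS sat (T ∪ {ψ}) ≠ TrivS sat) (hsub : ∀ A ∈ C, ModS sat (T ∪ {ψ}) ⊆ A) :
    IsCutting sat T ψ ((· ∩ ModS sat {ψ}) '' C) := by
  have hsub_inter : ∀ A ∈ C, ModS sat (T ∪ {ψ}) ⊆ A ∩ ModS sat {ψ} := fun A hA =>
    Set.subset_inter (hsub A hA) (modS_anti Set.subset_union_right)
  have htriv : TrivS sat ⊂ ModS sat (T ∪ {ψ}) :=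
    (trivS_subset_modS _).ssubset_of_ne hne.symm
  refine ⟨?_, ?_, fun S hS hSne => Set.sUnion_mem_image_inter hC.union_closed _ hS hSne, ?_, ?_⟩
  · rintro _ ⟨A, hA, rfl⟩
    exact hC.inter_modS_subset ψ hA
  · rintro _ ⟨A, hA, rfl⟩
    exact htriv.trans_subset (hsub_inter A hA)
  · exact ⟨_, hC.top_mem,
      (hC.inter_modS_subset ψ hC.top_mem).antisymm (hsub_inter _ hC.top_mem)⟩
  · exact Set.IsWF.image_of_monotoneOn_of_isChain hC.wf hchain
      fun _ _ _ _ hAB => Set.inter_subset_inter_left _ hAB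

theorem IsCutting.explRel_self {T : Set Sen} {ψ : Sen} {C : Set (Set M)}
    (hC : IsCutting sat T ψ C) (hne : ModS sat (T ∪ {ψ}) ≠ TrivS sat)
    (hsub : ∀ A ∈ C, ModS sat (T ∪ {ψ}) ⊆ A) : ExplRel sat T C ψ :=
  ⟨hne, _, ⟨hC.top_mem, fun B hB hlt => hlt.not_subset (hsub B hB)⟩, subset_rfl⟩

end Satisfaction

theorem stmt_14_general (sat : M → Sen → Prop) (T : Set Sen)
    (φ ψ : Sen) (Cφ : Set (Set M)) (hC : IsCutting sat T φ Cφ)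
    (hchain : IsChain (· ⊆ ·) Cφ)
    (h : ExplRel sat T Cφ ψ) :
    IsCutting sat T ψ ((fun A => A ∩ ModS sat {ψ}) '' Cφ) ∧
      ExplRel sat T ((fun A => A ∩ ModS sat {ψ}) '' Cφ) ψ := by
  obtain ⟨hne, A₀, hA₀, hsubA₀⟩ := h
  have hsub : ∀ A ∈ Cφ, ModS sat (T ∪ {ψ}) ⊆ A := fun A hA =>
    hsubA₀.trans (hchain.subset_of_mem_minCut hA₀ hA)
  have hcut := hC.image_inter_modS hchain hne hsub
  refine ⟨hcut, hcut.explRel_self hne ?_⟩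
  rintro _ ⟨A, hA, rfl⟩
  exact Set.subset_inter (hsub A hA) (modS_anti Set.subset_union_right)

theorem stmt_14 (sat : M → Sen → Prop) (T : Set Sen) (hT : T.Finite)
    (φ ψ : Sen) (Cφ : Set (Set M)) (hC : IsCutting sat T φ Cφ)
    (hchain : IsChain (· ⊆ ·) Cφ)
    (h : ExplRel sat T Cφ ψ) :
    IsCutting sat T ψ ((fun A => A ∩ ModS sat {ψ}) '' Cφ) ∧
      ExplRel sat T ((fun A => A ∩ ModS sat {ψ}) '' Cφ) ψ :=
  stmt_14_general sat T φ ψ Cφ hC hchain h
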